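/- For every real c with 0 < c ≤ 1/2 and every integer n ≥ 1, the partial sum of binomial coefficients satisfies ∑_{i=0}^{⌊cn⌋} C(n,i) ≤ 2^{n·H(c)}, where H(c) = −c·log₂ c − (1−c)·log₂(1−c) is the binary entropy and C(n,i) denotes the binomial coefficient. -/
import Mathlib

/-- The binary entropy function H(x) = −x·log₂ x − (1−x)·log₂(1−x). -/
noncomputable def binEnt (x : ℝ) : ℝ :=
  -x * Real.logb 2 x - (1 - x) * Real.logb 2 (1 - x)

/-- for 0 < c ≤ 1/2 and n ≥ 1,
∑_{i=0}^{⌊cn⌋} C(n,i) ≤ 2^{n·H(c)}, where H is the binary entropy. -/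
theorem binomial_partial_sum_le_entropy_bound
    (c : ℝ) (hc0 : 0 < c) (hc : c ≤ 1/2) (n : ℕ) (hn : 1 ≤ n) :
    (∑ i ∈ Finset.range (⌊c * (n : ℝ)⌋₊ + 1), (n.choose i : ℝ)) ≤
      (2 : ℝ) ^ ((n : ℝ) * binEnt c) := by
  have hc1 : c < 1 := lt_of_le_of_lt hc (by norm_num)
  have h1c : (0:ℝ) < 1 - c := by linarith
  have hcc : c ≤ 1 - c := by linarith
  set k := ⌊c * (n : ℝ)⌋₊ with hkdef
  have hcn : (0:ℝ) ≤ c * n := by positivity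
  have hk : (k : ℝ) ≤ c * n := Nat.floor_le hcn
  have hn' : (0:ℝ) ≤ (n:ℝ) := Nat.cast_nonneg n
  have hkn : k ≤ n := by
    have h : c * n ≤ (n:ℝ) := by nlinarith
    calc k ≤ ⌊(n:ℝ)⌋₊ := Nat.floor_le_floor h
      _ = n := Nat.floor_natCast n
  set E : ℝ := (2:ℝ) ^ (-((n : ℝ) * binEnt c)) with hEdef
  have hEpos : 0 < E := Real.rpow_pos_of_pos (by norm_num) _
  -- E = c^(cn) * (1-c)^((1-c)n)  as rpow
  have hE : E = c ^ (c * n) * (1 - c) ^ ((1 - c) * n) := by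
    have h2c : (2:ℝ) ^ (Real.logb 2 c) = c := Real.rpow_logb (by norm_num) (by norm_num) hc0
    have h2c' : (2:ℝ) ^ (Real.logb 2 (1 - c)) = 1 - c :=
      Real.rpow_logb (by norm_num) (by norm_num) h1c
    rw [hEdef, binEnt]
    rw [show -((n:ℝ) * (-c * Real.logb 2 c - (1 - c) * Real.logb 2 (1 - c)))
        = Real.logb 2 c * (c * n) + Real.logb 2 (1 - c) * ((1 - c) * n) by ring]
    rw [Real.rpow_add (by norm_num),
      Real.rpow_mul (by norm_num : (0:ℝ) ≤ 2) (Real.logb 2 c) (c * n),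
      Real.rpow_mul (by norm_num : (0:ℝ) ≤ 2) (Real.logb 2 (1 - c)) ((1 - c) * n),
      h2c, h2c']
  -- key: for i ≤ k, E ≤ c^i * (1-c)^(n-i)
  have hkey : ∀ i ∈ Finset.range (k + 1), E ≤ c ^ i * (1 - c) ^ (n - i) := by
    intro i hi
    have hik : i ≤ k := Nat.lt_succ_iff.mp (Finset.mem_range.mp hi)
    have hin : i ≤ n := hik.trans hkn
    have hicn : (i : ℝ) ≤ c * n := le_trans (by exact_mod_cast hik) hk
    have hratio : c / (1 - c) ≤ 1 := (div_le_one h1c).mpr hcc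
    have hratio0 : 0 < c / (1 - c) := div_pos hc0 h1c
    have h1 : (c / (1 - c)) ^ (c * n) ≤ (c / (1 - c)) ^ (i : ℝ) :=
      Real.rpow_le_rpow_of_exponent_ge hratio0 hratio hicn
    have hrw1 : E = (1 - c) ^ (n : ℝ) * (c / (1 - c)) ^ (c * n) := by
      rw [hE, Real.div_rpow hc0.le h1c.le, show ((1:ℝ) - c) * n = (n:ℝ) - c * n by ring,
        Real.rpow_sub h1c]
      field_simp
    have hrw2 : c ^ i * (1 - c) ^ (n - i) = (1 - c) ^ (n : ℝ) * (c / (1 - c)) ^ (i : ℝ) := by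
      rw [Real.rpow_natCast, Real.rpow_natCast, div_pow, pow_sub₀ (1 - c) h1c.ne' hin]
      field_simp
    rw [hrw1, hrw2]
    exact mul_le_mul_of_nonneg_left h1 (Real.rpow_nonneg h1c.le _)
  -- sum bound
  have hsum1 : ∑ i ∈ Finset.range (k + 1), (n.choose i : ℝ) * (c ^ i * (1 - c) ^ (n - i)) ≤ 1 := by
    have hfull : ∑ i ∈ Finset.range (n + 1), (n.choose i : ℝ) * (c ^ i * (1 - c) ^ (n - i)) = 1 := by
      have := add_pow c (1 - c) n
      simp only [add_sub_cancel, one_pow] at this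
      rw [show (∑ i ∈ Finset.range (n + 1), (n.choose i : ℝ) * (c ^ i * (1 - c) ^ (n - i)))
        = ∑ i ∈ Finset.range (n + 1), c ^ i * (1 - c) ^ (n - i) * (n.choose i : ℝ) from
        Finset.sum_congr rfl fun i _ => by ring]
      exact this.symm
    calc ∑ i ∈ Finset.range (k + 1), (n.choose i : ℝ) * (c ^ i * (1 - c) ^ (n - i))
        ≤ ∑ i ∈ Finset.range (n + 1), (n.choose i : ℝ) * (c ^ i * (1 - c) ^ (n - i)) := by
          apply Finset.sum_le_sum_of_subset_of_nonneg
          · exact Finset.range_subset_range.mpr (by omega)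
          · intro i _ _
            positivity
      _ = 1 := hfull
  have hsum2 : (∑ i ∈ Finset.range (k + 1), (n.choose i : ℝ)) * E ≤ 1 := by
    rw [Finset.sum_mul]
    refine le_trans (Finset.sum_le_sum ?_) hsum1
    intro i hi
    exact mul_le_mul_of_nonneg_left (hkey i hi) (Nat.cast_nonneg _)
  have hfin : (∑ i ∈ Finset.range (k + 1), (n.choose i : ℝ)) ≤ E⁻¹ := by
    rw [← one_div]
    exact (le_div_iff₀ hEpos).mpr hsum2
  calc (∑ i ∈ Finset.range (k + 1), (n.choose i : ℝ)) ≤ E⁻¹ := hfin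
    _ = (2:ℝ) ^ ((n : ℝ) * binEnt c) := by
        rw [hEdef, ← Real.rpow_neg (by norm_num), neg_neg]
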